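/- arXiv:2508.05177 — 7 statements merged into one kernel-verified Lean document; each statement's English description precedes it below -/
import Mathlib

section
/- Let S be a deterministic automaton and P a (possibly nondeterministic) automaton over the same event set. If S is automata controllable w.r.t. P, then S is FM-controllable w.r.t. P. Hence, for deterministic supervisors, automata controllability and FM-controllability coincide. -/
namespace SCT

inductive Path {Q E : Type} (tr : Q → E → Q → Prop) : Q → List E → Q → Prop
  | nil (q : Q) : Path tr q [] q
  | cons {q q' q'' : Q} {a : E} {w : List E} :
      tr q a q' → Path tr q' w q'' → Path tr q (a :: w) q''

def CanDo {Q E : Type} (tr : Q → E → Q → Prop) (q : Q) (w : List E) : Prop :=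
  ∃ q', Path tr q w q'

def Lang {Q E : Type} (tr : Q → E → Q → Prop) (q0 : Q) : Set (List E) :=
  { w | CanDo tr q0 w }

/-- Language controllability of `K` w.r.t. `M`: `K·Σu ∩ M ⊆ K`. -/
def LangControllable {E : Type} (U : Set E) (K M : Set (List E)) : Prop :=
  ∀ w u, w ∈ K → u ∈ U → w ++ [u] ∈ M → w ++ [u] ∈ K

/-- Synchronous product transition relation. -/
def prodTr {Q1 Q2 E : Type} (t1 : Q1 → E → Q1 → Prop) (t2 : Q2 → E → Q2 → Prop) :
    Q1 × Q2 → E → Q1 × Q2 → Prop :=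
  fun p a p' => t1 p.1 a p'.1 ∧ t2 p.2 a p'.2

def Deterministic {Q E : Type} (tr : Q → E → Q → Prop) : Prop :=
  ∀ q a q' q'', tr q a q' → tr q a q'' → q' = q''

/-- Automata controllability of S w.r.t. P. -/
def AC {QS QP E : Type} (U : Set E) (tS : QS → E → QS → Prop) (s0 : QS)
    (tP : QP → E → QP → Prop) (p0 : QP) : Prop :=
  ∀ w u, u ∈ U → CanDo tP p0 (w ++ [u]) → CanDo tS s0 w → CanDo tS s0 (w ++ [u])

/-- FM-controllability of S w.r.t. P. -/
def FM {QS QP E : Type} (U : Set E) (tS : QS → E → QS → Prop) (s0 : QS)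
    (tP : QP → E → QP → Prop) (p0 : QP) : Prop :=
  ∀ w u q, u ∈ U → CanDo tP p0 (w ++ [u]) → Path tS s0 w q → ∃ q', tS q u q'

def Reach {Q E : Type} (tr : Q → E → Q → Prop) (q0 q : Q) : Prop :=
  ∃ w, Path tr q0 w q

/-- Σu-admissibility of S w.r.t. P (Kushi–Takai). -/
def KT {QS QP E : Type} (U : Set E) (tS : QS → E → QS → Prop) (s0 : QS)
    (tP : QP → E → QP → Prop) (p0 : QP) : Prop :=
  ∀ qS qP u, Reach (prodTr tS tP) (s0, p0) (qS, qP) → u ∈ U →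
    (∃ qP', tP qP u qP') → ∃ q', prodTr tS tP (qS, qP) u q'

/-- Control relation (for deterministic automata). -/
def ControlRel {QS QP E : Type} (U : Set E) (tS : QS → E → QS → Prop)
    (tP : QP → E → QP → Prop) (R : QS → QP → Prop) : Prop :=
  ∀ qS qP, R qS qP →
    (∀ a qS' qP', tS qS a qS' → tP qP a qP' → R qS' qP') ∧
    (∀ u, u ∈ U → (∃ qP', tP qP u qP') →
      (∃ qS', tS qS u qS') ∧ ∀ qS' qP', tS qS u qS' → tP qP u qP' → R qS' qP')

/-- Partial bisimulation (deterministic version). -/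
def PB {QS QP E : Type} (U : Set E) (tS : QS → E → QS → Prop)
    (tP : QP → E → QP → Prop) (R : QS → QP → Prop) : Prop :=
  ∀ qS qP, R qS qP →
    (∀ a, (∃ qS', tS qS a qS') →
      (∃ qP', tP qP a qP') ∧ ∀ qS' qP', tS qS a qS' → tP qP a qP' → R qS' qP') ∧
    (∀ u, u ∈ U → (∃ qP', tP qP u qP') →
      (∃ qS', tS qS u qS') ∧ ∀ qS' qP', tS qS u qS' → tP qP u qP' → R qS' qP')

/-- Nondeterministic partial bisimulation. -/
def NPB {QS QP E : Type} (U : Set E) (tS : QS → E → QS → Prop)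
    (tP : QP → E → QP → Prop) (R : QS → QP → Prop) : Prop :=
  ∀ qS qP, R qS qP →
    (∀ a qS', tS qS a qS' → ∃ qP', tP qP a qP' ∧ R qS' qP') ∧
    (∀ u qP', u ∈ U → tP qP u qP' → ∃ qS', tS qS u qS' ∧ R qS' qP')

/-- State controllability (via an embedding `f`); `Σc = Uᶜ`. -/
def SC {QS QP E : Type} (U : Set E) (tS : QS → E → QS → Prop) (s0 : QS)
    (tP : QP → E → QP → Prop) (p0 : QP) : Prop :=
  ∃ f : QS → QP, f s0 = p0 ∧
    (∀ q q' a, tS q a q' → tP (f q) a (f q')) ∧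
    (∀ q a, ¬ (∃ q', tS q a q') → (∃ p', tP (f q) a p') → a ∉ U)

/-- S is a subautomaton of P (both modelled over the same state type). -/
def Sub {Q E : Type} (tS tP : Q → E → Q → Prop) (s0 p0 : Q) : Prop :=
  (∀ q a q', tS q a q' → tP q a q') ∧ s0 = p0

/-- FM⊆-controllability of a subautomaton S w.r.t. P. -/
def FMsub {Q E : Type} (U : Set E) (tS : Q → E → Q → Prop) (s0 : Q)
    (tP : Q → E → Q → Prop) (p0 : Q) : Prop :=
  ∀ w u q q', u ∈ U → Path tP p0 w q → tP q u q' → Path tS s0 w q → tS q u q'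

/-- Nondeterministic state controllability (Zhou et al.). -/
def SCn {QS QP E : Type} (U : Set E) (tS : QS → E → QS → Prop) (s0 : QS)
    (tP : QP → E → QP → Prop) (p0 : QP) : Prop :=
  ∀ w u, w ∈ Lang tS s0 → u ∈ U → w ++ [u] ∈ Lang tP p0 →
    ∀ q, Path tS s0 w q → ∃ q', tS q u q'

lemma path_append_iff {Q E : Type} (tr : Q → E → Q → Prop) :
    ∀ (w v : List E) (q q'' : Q),
      Path tr q (w ++ v) q'' ↔ ∃ m, Path tr q w m ∧ Path tr m v q'' := by
  intro w
  induction w with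
  | nil =>
    intro v q q''
    constructor
    · intro h; exact ⟨q, Path.nil q, h⟩
    · rintro ⟨m, hm, hv⟩; cases hm; exact hv
  | cons a w ih =>
    intro v q q''
    constructor
    · intro h
      cases h with
      | cons h1 h2 =>
        obtain ⟨m, hm, hv⟩ := (ih v _ q'').mp h2
        exact ⟨m, Path.cons h1 hm, hv⟩
    · rintro ⟨m, hm, hv⟩
      cases hm with
      | cons h1 h2 => exact Path.cons h1 ((ih v _ q'').mpr ⟨m, h2, hv⟩)

lemma path_det {Q E : Type} {tr : Q → E → Q → Prop} (hdet : Deterministic tr) :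
    ∀ (w : List E) (q q1 q2 : Q), Path tr q w q1 → Path tr q w q2 → q1 = q2 := by
  intro w
  induction w with
  | nil => intro q q1 q2 h1 h2; cases h1; cases h2; rfl
  | cons a w ih =>
    intro q q1 q2 h1 h2
    cases h1 with
    | cons t1 p1 =>
      cases h2 with
      | cons t2 p2 =>
        have := hdet _ _ _ _ t1 t2
        subst this
        exact ih _ _ _ p1 p2

theorem stmt4 {QS QP E : Type} (U : Set E) (tS : QS → E → QS → Prop) (s0 : QS)
    (tP : QP → E → QP → Prop) (p0 : QP) (hdet : Deterministic tS) :
    AC U tS s0 tP p0 ↔ FM U tS s0 tP p0 := by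
  constructor
  · intro hAC w u q hu hP hpath
    obtain ⟨q'', hq''⟩ := hAC w u hu hP ⟨q, hpath⟩
    obtain ⟨m, hm, hu'⟩ := (path_append_iff tS w [u] s0 q'').mp hq''
    have : m = q := path_det hdet w s0 m q hm hpath
    subst this
    cases hu' with
    | cons t p => exact ⟨_, t⟩
  · intro hFM w u hu hP ⟨q, hpath⟩
    obtain ⟨q', hq'⟩ := hFM w u q hu hP hpath
    exact ⟨q', (path_append_iff tS w [u] s0 q').mpr
      ⟨q, hpath, Path.cons hq' (Path.nil q')⟩⟩

end SCT
end

section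
/- For deterministic automata S and P over the same event set, S is automata controllable w.r.t. P if and only if there exists a control relation R ⊆ Q_S × Q_P with q0_S R q0_P. A control relation R satisfies for all q_S R q_P: (1) for all a ∈ Σ, if q_S →_S^a and q_P →_P^a then Δ_S(q_S,a) R Δ_P(q_P,a); (2) for all u ∈ Σ_u, if q_P →_P^u then q_S →_S^u and Δ_S(q_S,u) R Δ_P(q_P,u). -/
namespace SCT

lemma path_append {Q E : Type} {tr : Q → E → Q → Prop} {q q' q'' : Q} {w v : List E}
    (h1 : Path tr q w q') (h2 : Path tr q' v q'') : Path tr q (w ++ v) q'' := by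
  induction h1 with
  | nil => exact h2
  | cons h _ ih => exact Path.cons h (ih h2)

lemma path_split {Q E : Type} {tr : Q → E → Q → Prop} {q q'' : Q} {w v : List E}
    (h : Path tr q (w ++ v) q'') : ∃ q', Path tr q w q' ∧ Path tr q' v q'' := by
  induction w generalizing q with
  | nil => exact ⟨q, Path.nil q, h⟩
  | cons a w ih =>
    cases h with
    | cons h1 h2 =>
      obtain ⟨q', hw, hv⟩ := ih h2
      exact ⟨q', Path.cons h1 hw, hv⟩

lemma path_unique {Q E : Type} {tr : Q → E → Q → Prop} (hd : Deterministic tr)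
    {q q1 q2 : Q} {w : List E} (h1 : Path tr q w q1) (h2 : Path tr q w q2) : q1 = q2 := by
  induction h1 generalizing q2 with
  | nil => cases h2; rfl
  | cons h _ ih =>
    cases h2 with
    | cons h' hp' => exact ih (hd _ _ _ _ h' h ▸ hp')

theorem stmt6 {QS QP E : Type} (U : Set E) (tS : QS → E → QS → Prop) (s0 : QS)
    (tP : QP → E → QP → Prop) (p0 : QP)
    (hS : Deterministic tS) (hP : Deterministic tP) :
    AC U tS s0 tP p0 ↔ ∃ R : QS → QP → Prop, ControlRel U tS tP R ∧ R s0 p0 := by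
  constructor
  · intro hAC
    refine ⟨fun qS qP => ∃ w, Path tS s0 w qS ∧ Path tP p0 w qP, ?_, ⟨[], Path.nil _, Path.nil _⟩⟩
    rintro qS qP ⟨w, hwS, hwP⟩
    constructor
    · intro a qS' qP' hS' hP'
      exact ⟨w ++ [a], path_append hwS (Path.cons hS' (Path.nil _)),
        path_append hwP (Path.cons hP' (Path.nil _))⟩
    · intro u hu ⟨qP', hP'⟩
      obtain ⟨q', hq'⟩ := hAC w u hu
        ⟨qP', path_append hwP (Path.cons hP' (Path.nil _))⟩ ⟨qS, hwS⟩
      obtain ⟨qm, hws, hus⟩ := path_split hq'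
      have : qm = qS := path_unique hS hws hwS
      subst this
      cases hus with
      | cons h1 h2 =>
        cases h2
        refine ⟨⟨_, h1⟩, ?_⟩
        intro qS' qP'' hS' hP''
        exact ⟨w ++ [u], path_append hwS (Path.cons hS' (Path.nil _)),
          path_append hwP (Path.cons hP'' (Path.nil _))⟩
  · rintro ⟨R, hR, h0⟩ w u hu ⟨qf, hPpath⟩ ⟨qS, hSpath⟩
    obtain ⟨qP, hwP, huP⟩ := path_split hPpath
    have key : ∀ w q p qS qP, R q p → Path tS q w qS → Path tP p w qP → R qS qP := by
      intro w
      induction w with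
      | nil => intro q p qS qP hr h1 h2; cases h1; cases h2; exact hr
      | cons a w ih =>
        intro q p qS qP hr h1 h2
        cases h1 with
        | cons hs1 hs2 =>
          cases h2 with
          | cons hp1 hp2 =>
            exact ih _ _ _ _ ((hR q p hr).1 a _ _ hs1 hp1) hs2 hp2
    have hRq := key w s0 p0 qS qP h0 hSpath hwP
    cases huP with
    | cons h1 h2 =>
      cases h2
      obtain ⟨⟨qS', hS'⟩, _⟩ := (hR qS qP hRq).2 u hu ⟨_, h1⟩
      exact ⟨qS', path_append hSpath (Path.cons hS' (Path.nil _))⟩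

end SCT
end

section
/- Let S and P be deterministic automata over the same event set. If S is state controllable w.r.t. P (witnessed by an embedding f), then S is partially bisimilar to P; in particular, the relation R = { (s, f(s)) | s ∈ Q_S } is a partial bisimulation. -/
namespace SCT

theorem stmt9 {QS QP E : Type} (U : Set E) (tS : QS → E → QS → Prop) (s0 : QS)
    (tP : QP → E → QP → Prop) (p0 : QP)
    (hS : Deterministic tS) (hP : Deterministic tP)
    (f : QS → QP) (hf0 : f s0 = p0)
    (hfstep : ∀ q q' a, tS q a q' → tP (f q) a (f q'))
    (hfadm : ∀ q a, ¬ (∃ q', tS q a q') → (∃ p', tP (f q) a p') → a ∉ U) :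
    PB U tS tP (fun q qP => qP = f q) ∧
      ∃ R : QS → QP → Prop, PB U tS tP R ∧ R s0 p0 := by
  have key : PB U tS tP (fun q qP => qP = f q) := by
    intro qS qP hR
    subst hR
    constructor
    · intro a ⟨qS', hstep⟩
      refine ⟨⟨f qS', hfstep _ _ _ hstep⟩, ?_⟩
      intro s' p' hs hp
      exact hP _ _ _ _ hp (hfstep _ _ _ hs)
    · intro u hu hex
      have hs : ∃ qS', tS qS u qS' := by
        by_contra h
        exact hfadm qS u h hex hu
      refine ⟨hs, ?_⟩
      intro s' p' hs' hp'
      exact hP _ _ _ _ hp' (hfstep _ _ _ hs')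
  exact ⟨key, ⟨fun q qP => qP = f q, key, hf0.symm⟩⟩

end SCT
end

section
/- For nondeterministic automata S and P with S a subautomaton of P, if S is FM⊆-controllable w.r.t. P then q0_S is nondeterministically partially bisimilar to q0_P; concretely, the relation R = { (q, q) | q ∈ Reach(S) } ⊆ Q_S × Q_P is a nondeterministic partial bisimulation. -/
namespace SCT

theorem Path.snoc {Q E : Type} {tr : Q → E → Q → Prop} {q q' q'' : Q} {w : List E} {a : E}
    (hp : Path tr q w q') (ht : tr q' a q'') : Path tr q (w ++ [a]) q'' := by
  induction hp with
  | nil => exact Path.cons ht (Path.nil _)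
  | cons h _ ih => exact Path.cons h (ih ht)

theorem Path.mono {Q E : Type} {tS tP : Q → E → Q → Prop} (hsub : ∀ q a q', tS q a q' → tP q a q')
    {q q' : Q} {w : List E} (hp : Path tS q w q') : Path tP q w q' := by
  induction hp with
  | nil => exact Path.nil _
  | cons h _ ih => exact Path.cons (hsub _ _ _ h) ih

theorem stmt12 {Q E : Type} (U : Set E) (tS tP : Q → E → Q → Prop) (s0 p0 : Q)
    (hsub : Sub tS tP s0 p0) (h : FMsub U tS s0 tP p0) :
    NPB U tS tP (fun qS qP => qS = qP ∧ Reach tS s0 qS) ∧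
      ∃ R : Q → Q → Prop, NPB U tS tP R ∧ R s0 p0 := by
  obtain ⟨hmono, he⟩ := hsub
  have hnpb : NPB U tS tP (fun qS qP => qS = qP ∧ Reach tS s0 qS) := by
    rintro qS qP ⟨rfl, w, hw⟩
    constructor
    · intro a qS' hstep
      exact ⟨qS', hmono _ _ _ hstep, rfl, w ++ [a], hw.snoc hstep⟩
    · intro u qP' hu hstep
      have hPw : Path tP p0 w qS := he ▸ Path.mono hmono hw
      have hS : tS qS u qP' := h w u qS qP' hu hPw hstep hw
      exact ⟨qP', hS, rfl, w ++ [u], hw.snoc hS⟩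
  exact ⟨hnpb, _, hnpb, he, ⟨[], Path.nil _⟩⟩

end SCT
end

section
/- There exist nondeterministic automata S and P over a common event set with S ⊆ P such that S is FM-controllable w.r.t. P and q0_S is nondeterministically partially bisimilar to q0_P, but S is not FM⊆-controllable w.r.t. P. (Concretely: P has transitions p1 →^c p2, p2 →^u p3, p2 →^u p4; S is the subautomaton with states {p1,p2,p3} and transitions p1 →^c p2, p2 →^u p3; c controllable, u uncontrollable.) -/
namespace SCT

def exTS : Fin 4 → Bool → Fin 4 → Prop := fun q a q' =>
  (q = 0 ∧ a = false ∧ q' = 1) ∨ (q = 1 ∧ a = true ∧ q' = 2)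

def exTP : Fin 4 → Bool → Fin 4 → Prop := fun q a q' =>
  (q = 0 ∧ a = false ∧ q' = 1) ∨ (q = 1 ∧ a = true ∧ q' = 2) ∨ (q = 1 ∧ a = true ∧ q' = 3)

def exR : Fin 4 → Fin 4 → Prop := fun q p =>
  (q = 0 ∧ p = 0) ∨ (q = 1 ∧ p = 1) ∨ (q = 2 ∧ p = 2) ∨ (q = 2 ∧ p = 3)

lemma exTS_path_inv : ∀ (w : List Bool) (q : Fin 4), Path exTS 0 w q →
    (w = [] ∧ q = 0) ∨ (w = [false] ∧ q = 1) ∨ (w = [false, true] ∧ q = 2) := by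
  rintro w q hp
  rcases hp with _ | ⟨h1, hp⟩
  · exact Or.inl ⟨rfl, rfl⟩
  rcases h1 with ⟨_, rfl, rfl⟩ | ⟨h, _⟩
  · rcases hp with _ | ⟨h2, hp⟩
    · exact Or.inr (Or.inl ⟨rfl, rfl⟩)
    rcases h2 with ⟨h, _⟩ | ⟨_, rfl, rfl⟩
    · simp [Fin.ext_iff] at h
    rcases hp with _ | ⟨h3, _⟩
    · exact Or.inr (Or.inr ⟨rfl, rfl⟩)
    rcases h3 with ⟨h, _⟩ | ⟨h, _⟩ <;> simp [Fin.ext_iff] at h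
  · simp [Fin.ext_iff] at h

theorem stmt13 : ∃ (Q E : Type) (U : Set E) (tS tP : Q → E → Q → Prop) (s0 p0 : Q),
    Sub tS tP s0 p0 ∧ FM U tS s0 tP p0 ∧
      (∃ R : Q → Q → Prop, NPB U tS tP R ∧ R s0 p0) ∧
      ¬ FMsub U tS s0 tP p0 := by
  refine ⟨Fin 4, Bool, {true}, exTS, exTP, 0, 0, ⟨?_, rfl⟩, ?_, ⟨exR, ?_, Or.inl ⟨rfl, rfl⟩⟩, ?_⟩
  · rintro q a q' (h | h) <;> simp [exTP, h]
  · -- FM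
    rintro w u q hu hP hS
    rcases exTS_path_inv w q hS with ⟨rfl, rfl⟩ | ⟨rfl, rfl⟩ | ⟨rfl, rfl⟩
    · exfalso
      simp only [Set.mem_singleton_iff] at hu; subst hu
      obtain ⟨q', hq'⟩ := hP
      rcases hq' with _ | ⟨h, _⟩
      rcases h with (⟨_, h0, _⟩ | ⟨h0, _⟩ | ⟨h0, _⟩) <;> exact absurd h0 (by decide)
    · simp only [Set.mem_singleton_iff] at hu; subst hu
      exact ⟨2, Or.inr ⟨rfl, rfl, rfl⟩⟩
    · exfalso
      simp only [Set.mem_singleton_iff] at hu; subst hu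
      obtain ⟨q', hq'⟩ := hP
      rcases hq' with _ | ⟨h1, hq'⟩
      rcases hq' with _ | ⟨h2, hq'⟩
      rcases h1 with (⟨_, _, rfl⟩ | ⟨h, _⟩ | ⟨h, _⟩)
      · rcases h2 with (⟨h, _⟩ | ⟨_, _, rfl⟩ | ⟨_, _, rfl⟩)
        · simp at h
        · rcases hq' with _ | ⟨h3, _⟩
          rcases h3 with (⟨h, _⟩ | ⟨h, _⟩ | ⟨h, _⟩) <;> simp at h
        · rcases hq' with _ | ⟨h3, _⟩
          rcases h3 with (⟨h, _⟩ | ⟨h, _⟩ | ⟨h, _⟩) <;> simp at h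
      · simp at h
      · simp at h
  · -- NPB
    rintro qS qP hR
    constructor
    · rintro a qS' hT
      rcases hT with ⟨rfl, rfl, rfl⟩ | ⟨rfl, rfl, rfl⟩
      · rcases hR with ⟨_, rfl⟩ | ⟨h, _⟩ | ⟨h, _⟩ | ⟨h, _⟩
        · exact ⟨1, Or.inl ⟨rfl, rfl, rfl⟩, Or.inr (Or.inl ⟨rfl, rfl⟩)⟩
        all_goals exact absurd h (by decide)
      · rcases hR with ⟨h, _⟩ | ⟨_, rfl⟩ | ⟨h, _⟩ | ⟨h, _⟩
        · exact absurd h (by decide)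
        · exact ⟨2, Or.inr (Or.inl ⟨rfl, rfl, rfl⟩), Or.inr (Or.inr (Or.inl ⟨rfl, rfl⟩))⟩
        all_goals exact absurd h (by decide)
    · rintro u qP' hu hT
      simp only [Set.mem_singleton_iff] at hu; subst hu
      rcases hT with ⟨_, hf, _⟩ | ⟨hq, _, rfl⟩ | ⟨hq, _, rfl⟩
      · exact absurd hf (by decide)
      · subst hq
        rcases hR with ⟨_, h⟩ | ⟨rfl, _⟩ | ⟨_, h⟩ | ⟨_, h⟩
        · exact absurd h (by decide)
        · exact ⟨2, Or.inr ⟨rfl, rfl, rfl⟩, Or.inr (Or.inr (Or.inl ⟨rfl, rfl⟩))⟩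
        all_goals exact absurd h (by decide)
      · subst hq
        rcases hR with ⟨_, h⟩ | ⟨rfl, _⟩ | ⟨_, h⟩ | ⟨_, h⟩
        · exact absurd h (by decide)
        · exact ⟨2, Or.inr ⟨rfl, rfl, rfl⟩, Or.inr (Or.inr (Or.inr ⟨rfl, rfl⟩))⟩
        all_goals exact absurd h (by decide)
  · -- not FMsub
    intro h
    have := h [false] true 1 3 rfl
      (Path.cons (Or.inl ⟨rfl, rfl, rfl⟩) (Path.nil 1))
      (Or.inr (Or.inr ⟨rfl, rfl, rfl⟩))
      (Path.cons (Or.inl ⟨rfl, rfl, rfl⟩) (Path.nil 1))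
    rcases this with ⟨_, h, _⟩ | ⟨_, _, h⟩ <;> exact absurd h (by decide)

end SCT
end

section
/- There exist automata S and P over a common event set such that S is language controllable, FM-controllable, and Σ_u-admissible w.r.t. P, but q0_S is not nondeterministically partially bisimilar to q0_P. (Concretely: Σ = {c} with c controllable; S has a single transition s →^c s'; P has a single state p and no transitions.) -/
namespace SCT

theorem stmt15 : ∃ (QS QP E : Type) (U : Set E) (tS : QS → E → QS → Prop) (s0 : QS)
    (tP : QP → E → QP → Prop) (p0 : QP),
    LangControllable U (Lang tS s0) (Lang tP p0) ∧ FM U tS s0 tP p0 ∧ KT U tS s0 tP p0 ∧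
      ¬ ∃ R : QS → QP → Prop, NPB U tS tP R ∧ R s0 p0 := by
  refine ⟨Bool, Unit, Unit, ∅, fun q _ q' => q = false ∧ q' = true, false,
    fun _ _ _ => False, (), ?_, ?_, ?_, ?_⟩
  · intro w u _ hu _; exact absurd hu (Set.notMem_empty u)
  · intro w u q hu _ _; exact absurd hu (Set.notMem_empty u)
  · intro qS qP u _ hu _; exact absurd hu (Set.notMem_empty u)
  · rintro ⟨R, hNPB, hR⟩
    obtain ⟨h1, _⟩ := hNPB false () hR
    obtain ⟨_, h, _⟩ := h1 () true ⟨rfl, rfl⟩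
    exact h

end SCT
end

section
/- There exist deterministic automata S and P over a common event set such that S is language controllable and partially bisimilar w.r.t. P but not state controllable w.r.t. P. (Concretely: Σ = {c} controllable; S has one state s with a c-self-loop; P has p →^c p' and a c-self-loop on p'.) -/
namespace SCT

theorem stmt16 : ∃ (QS QP E : Type) (U : Set E) (tS : QS → E → QS → Prop) (s0 : QS)
    (tP : QP → E → QP → Prop) (p0 : QP),
    Deterministic tS ∧ Deterministic tP ∧
      LangControllable U (Lang tS s0) (Lang tP p0) ∧
      (∃ R : QS → QP → Prop, PB U tS tP R ∧ R s0 p0) ∧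
      ¬ SC U tS s0 tP p0 := by
  refine ⟨Unit, Bool, Unit, ∅, fun _ _ _ => True, (), fun _ _ q' => q' = true, false,
    ?_, ?_, ?_, ?_, ?_⟩
  · intro q a q' q'' _ _; rfl
  · intro q a q' q'' h1 h2; rw [h1, h2]
  · intro w u _ hu; exact absurd hu (Set.notMem_empty u)
  · refine ⟨fun _ _ => True, ?_, trivial⟩
    intro qS qP _
    constructor
    · intro a _; exact ⟨⟨true, rfl⟩, fun _ _ _ _ => trivial⟩
    · intro u hu; exact absurd hu (Set.notMem_empty u)
  · rintro ⟨f, hf0, htr, -⟩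
    have := htr () () () trivial
    rw [hf0] at this
    exact Bool.false_ne_true this

end SCT
end
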